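/- arXiv:2010.06121 — 4 statements merged into one kernel-verified Lean document; each statement's English description precedes it below -/
import Mathlib

section
/- Let K > 1, d ≥ 1, σ > 0, and q = (2 log K)/(K^2 - 1). Define g(η) = ((K^2+1)/(K^2-1)) * d * η - K * sqrt( (4 d^2 η^2)/(K^2-1)^2 + q * d * σ^2 ). Then g is strictly monotone increasing in η for η ≥ 0. -/
set_option maxHeartbeats 1000000


/-- For `K > 1`, `d ≥ 1`, `σ > 0` and `q = (2 log K)/(K^2-1)`, the intercept function
`g(η) = ((K^2+1)/(K^2-1)) d η - K sqrt(4 d^2 η^2/(K^2-1)^2 + q d σ^2)` is strictly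
monotone increasing in `η` on `[0, ∞)`. -/
theorem g_strictMonoOn (K σ : ℝ) (d : ℕ) (hK : 1 < K) (hd : 1 ≤ d) (hσ : 0 < σ)
    (q : ℝ) (hq : q = 2 * Real.log K / (K ^ 2 - 1)) :
    StrictMonoOn
      (fun η : ℝ => (K ^ 2 + 1) / (K ^ 2 - 1) * d * η -
        K * Real.sqrt (4 * (d : ℝ) ^ 2 * η ^ 2 / (K ^ 2 - 1) ^ 2 + q * d * σ ^ 2))
      (Set.Ici 0) := by
  intro x hx y hy hxy
  simp only [Set.mem_Ici] at hx hy
  have hs : (0:ℝ) < K ^ 2 - 1 := by nlinarith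
  have hdpos : (0:ℝ) < (d : ℝ) := by exact_mod_cast hd
  have hqpos : 0 < q := by
    rw [hq]
    have hlog : 0 < Real.log K := Real.log_pos hK
    positivity
  have hc : 0 < q * d * σ ^ 2 := by positivity
  set c := q * d * σ ^ 2 with hcdef
  have hpx : (0:ℝ) ≤ 4 * (d : ℝ) ^ 2 * x ^ 2 / (K ^ 2 - 1) ^ 2 + c := by positivity
  have hpy : (0:ℝ) ≤ 4 * (d : ℝ) ^ 2 * y ^ 2 / (K ^ 2 - 1) ^ 2 + c := by positivity
  set sx := Real.sqrt (4 * (d : ℝ) ^ 2 * x ^ 2 / (K ^ 2 - 1) ^ 2 + c) with hsx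
  set sy := Real.sqrt (4 * (d : ℝ) ^ 2 * y ^ 2 / (K ^ 2 - 1) ^ 2 + c) with hsy
  have hsx2 : sx ^ 2 = 4 * (d : ℝ) ^ 2 * x ^ 2 / (K ^ 2 - 1) ^ 2 + c :=
    Real.sq_sqrt hpx
  have hs' : (K ^ 2 - 1) ≠ 0 := ne_of_gt hs
  have hsxlb : 2 * (d : ℝ) * x / (K ^ 2 - 1) < sx := by
    rw [hsx, show (4 * (d : ℝ) ^ 2 * x ^ 2 / (K ^ 2 - 1) ^ 2 + c)
        = (2 * (d : ℝ) * x / (K ^ 2 - 1)) ^ 2 + c by field_simp; ring]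
    calc 2 * (d : ℝ) * x / (K ^ 2 - 1)
        = Real.sqrt ((2 * (d : ℝ) * x / (K ^ 2 - 1)) ^ 2) := by
          rw [Real.sqrt_sq (by positivity)]
      _ < Real.sqrt ((2 * (d : ℝ) * x / (K ^ 2 - 1)) ^ 2 + c) := by
          apply Real.sqrt_lt_sqrt (by positivity); linarith
  have hsxpos : 0 < sx := lt_of_le_of_lt (by positivity) hsxlb
  have ht : 0 < 2 * (d : ℝ) * (y - x) / (K ^ 2 - 1) := by
    apply div_pos (by nlinarith) hs
  have key : sy < sx + 2 * (d : ℝ) * (y - x) / (K ^ 2 - 1) := by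
    have hrhs : 0 < sx + 2 * (d : ℝ) * (y - x) / (K ^ 2 - 1) := by linarith
    rw [hsy]
    rw [show sx + 2 * (d : ℝ) * (y - x) / (K ^ 2 - 1)
        = Real.sqrt ((sx + 2 * (d : ℝ) * (y - x) / (K ^ 2 - 1)) ^ 2) from
      (Real.sqrt_sq hrhs.le).symm]
    apply Real.sqrt_lt_sqrt hpy
    have expand : (sx + 2 * (d : ℝ) * (y - x) / (K ^ 2 - 1)) ^ 2
        = sx ^ 2 + 2 * sx * (2 * (d : ℝ) * (y - x) / (K ^ 2 - 1))
          + (2 * (d : ℝ) * (y - x) / (K ^ 2 - 1)) ^ 2 := by ring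
    rw [expand, hsx2]
    have h1 : 2 * (2 * (d : ℝ) * x / (K ^ 2 - 1)) * (2 * (d : ℝ) * (y - x) / (K ^ 2 - 1))
        < 2 * sx * (2 * (d : ℝ) * (y - x) / (K ^ 2 - 1)) := by
      nlinarith
    have heq : 4 * (d : ℝ) ^ 2 * y ^ 2 / (K ^ 2 - 1) ^ 2
        = 4 * (d : ℝ) ^ 2 * x ^ 2 / (K ^ 2 - 1) ^ 2
          + 2 * (2 * (d : ℝ) * x / (K ^ 2 - 1)) * (2 * (d : ℝ) * (y - x) / (K ^ 2 - 1))
          + (2 * (d : ℝ) * (y - x) / (K ^ 2 - 1)) ^ 2 := by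
      field_simp
      ring
    linarith [heq]
  have hK0 : (0:ℝ) < K := by linarith
  have h2 : K * sy < K * sx + K * (2 * (d : ℝ) * (y - x) / (K ^ 2 - 1)) := by
    have := mul_lt_mul_of_pos_left key hK0
    rw [mul_add] at this
    exact this
  have hfin : K * (2 * (d : ℝ) * (y - x) / (K ^ 2 - 1)) <
      (K ^ 2 + 1) / (K ^ 2 - 1) * d * y - (K ^ 2 + 1) / (K ^ 2 - 1) * d * x := by
    rw [show K * (2 * (d : ℝ) * (y - x) / (K ^ 2 - 1))
        = K * (2 * (d : ℝ) * (y - x)) / (K ^ 2 - 1) by ring,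
      show (K ^ 2 + 1) / (K ^ 2 - 1) * d * y - (K ^ 2 + 1) / (K ^ 2 - 1) * d * x
        = (K ^ 2 + 1) * (d : ℝ) * (y - x) / (K ^ 2 - 1) by field_simp]
    rw [div_lt_div_iff_of_pos_right hs]
    nlinarith [mul_pos (mul_pos (by nlinarith : (0:ℝ) < (K - 1) ^ 2) hdpos) (sub_pos.mpr hxy)]
  simp only
  linarith [h2, hfin]
end

section
/- Let K > 1, d ≥ 1, σ > 0, q = (2 log K)/(K^2-1), and 0 < ε < η. With g(η) = ((K^2+1)/(K^2-1)) d η - K sqrt(4 d^2 η^2/(K^2-1)^2 + q d σ^2), the robust intercept b_rob = g(η - ε) satisfies b_rob < b_nat = g(η). -/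
set_option maxHeartbeats 1000000 in
/-- For `K > 1`, `d ≥ 1`, `σ > 0`, `q = (2 log K)/(K^2-1)` and `0 < ε < η`, the robust
intercept `b_rob = g(η-ε)` is strictly smaller than the natural intercept `b_nat = g(η)`,
where `g(η) = ((K^2+1)/(K^2-1)) d η - K sqrt(4 d^2 η^2/(K^2-1)^2 + q d σ^2)`. -/
theorem robust_intercept_lt (K σ ε η : ℝ) (d : ℕ) (hK : 1 < K) (hd : 1 ≤ d) (hσ : 0 < σ)
    (hε : 0 < ε) (hεη : ε < η)
    (q : ℝ) (hq : q = 2 * Real.log K / (K ^ 2 - 1))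
    (g : ℝ → ℝ)
    (hg : g = fun t : ℝ => (K ^ 2 + 1) / (K ^ 2 - 1) * d * t -
      K * Real.sqrt (4 * (d : ℝ) ^ 2 * t ^ 2 / (K ^ 2 - 1) ^ 2 + q * d * σ ^ 2)) :
    g (η - ε) < g η := by
  subst hg hq
  have hK0 : (0:ℝ) < K := lt_trans one_pos hK
  have hK2 : (0:ℝ) < K ^ 2 - 1 := by nlinarith
  have hd' : (1:ℝ) ≤ (d : ℝ) := by exact_mod_cast hd
  have hlog : 0 < Real.log K := Real.log_pos hK
  have hc : 0 < 2 * Real.log K / (K ^ 2 - 1) * d * σ ^ 2 := by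
    apply mul_pos (mul_pos (div_pos (by linarith) hK2) (by linarith))
    positivity
  have hs : 0 < η - ε := by linarith
  have hcomm : (2 * (d:ℝ) / (K ^ 2 - 1)) ^ 2 = 4 * (d:ℝ) ^ 2 / (K ^ 2 - 1) ^ 2 := by
    field_simp; ring
  simp only
  set c := 2 * Real.log K / (K ^ 2 - 1) * d * σ ^ 2 with hcdef
  set u := Real.sqrt (4 * (d:ℝ) ^ 2 * (η - ε) ^ 2 / (K ^ 2 - 1) ^ 2 + c) with hu
  set v := Real.sqrt (4 * (d:ℝ) ^ 2 * η ^ 2 / (K ^ 2 - 1) ^ 2 + c) with hv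
  have hu0 : 0 ≤ u := Real.sqrt_nonneg _
  have hv0 : 0 ≤ v := Real.sqrt_nonneg _
  have hu2 : u ^ 2 = 4 * (d:ℝ) ^ 2 * (η - ε) ^ 2 / (K ^ 2 - 1) ^ 2 + c := by
    rw [hu]; rw [Real.sq_sqrt]; positivity
  have hv2 : v ^ 2 = 4 * (d:ℝ) ^ 2 * η ^ 2 / (K ^ 2 - 1) ^ 2 + c := by
    rw [hv]; rw [Real.sq_sqrt]; positivity
  clear_value u v c
  clear hcdef hu hv
  have hsb : (0:ℝ) < 2 * d / (K ^ 2 - 1) := by positivity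
  have hulb : 2 * d / (K ^ 2 - 1) * (η - ε) < u := by
    have h1 : (2 * d / (K ^ 2 - 1) * (η - ε)) ^ 2 < u ^ 2 := by
      rw [hu2, mul_pow, hcomm]
      have e : 4 * (d:ℝ) ^ 2 / (K ^ 2 - 1) ^ 2 * (η - ε) ^ 2
          = 4 * (d:ℝ) ^ 2 * (η - ε) ^ 2 / (K ^ 2 - 1) ^ 2 := by ring
      linarith
    nlinarith [mul_pos (mul_pos hsb hs) hs]
  have hvlb : 2 * d / (K ^ 2 - 1) * η < v := by
    have h1 : (2 * d / (K ^ 2 - 1) * η) ^ 2 < v ^ 2 := by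
      rw [hv2, mul_pow, hcomm]
      have e : 4 * (d:ℝ) ^ 2 / (K ^ 2 - 1) ^ 2 * η ^ 2
          = 4 * (d:ℝ) ^ 2 * η ^ 2 / (K ^ 2 - 1) ^ 2 := by ring
      linarith
    nlinarith [mul_pos hsb (by linarith : (0:ℝ) < η)]
  have key : v - u ≤ 2 * d / (K ^ 2 - 1) * ε := by
    by_contra h
    push_neg at h
    have hdiff : v ^ 2 - u ^ 2 = (2 * d / (K ^ 2 - 1)) ^ 2 * (ε * (2 * η - ε)) := by
      rw [hv2, hu2, hcomm]; ring
    have hvu : 0 < v - u := lt_trans (mul_pos hsb hε) h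
    have hsum : 2 * d / (K ^ 2 - 1) * (2 * η - ε) < v + u := by
      have : 2 * d / (K ^ 2 - 1) * (2 * η - ε)
          = 2 * d / (K ^ 2 - 1) * η + 2 * d / (K ^ 2 - 1) * (η - ε) := by ring
      linarith
    have hmul := mul_lt_mul'' h hsum (le_of_lt (mul_pos hsb hε))
      (le_of_lt (mul_pos hsb (by linarith : (0:ℝ) < 2 * η - ε)))
    have e1 : (v - u) * (v + u) = v ^ 2 - u ^ 2 := by ring
    have e2 : 2 * ↑d / (K ^ 2 - 1) * ε * (2 * ↑d / (K ^ 2 - 1) * (2 * η - ε))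
        = (2 * ↑d / (K ^ 2 - 1)) ^ 2 * (ε * (2 * η - ε)) := by ring
    linarith
  have hKsb : K * (2 * d / (K ^ 2 - 1)) * ε < (K ^ 2 + 1) / (K ^ 2 - 1) * d * ε := by
    have e1 : K * (2 * d / (K ^ 2 - 1)) * ε = 2 * K * d * ε / (K ^ 2 - 1) := by ring
    have e2 : (K ^ 2 + 1) / (K ^ 2 - 1) * d * ε = (K ^ 2 + 1) * d * ε / (K ^ 2 - 1) := by ring
    rw [e1, e2, div_lt_div_iff₀ hK2 hK2]
    nlinarith [mul_pos (mul_pos (mul_pos hε hK2) (by linarith : (0:ℝ) < (d:ℝ)))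
      (mul_pos (sub_pos.mpr hK) (sub_pos.mpr hK))]
  have hfin := mul_le_mul_of_nonneg_left key (le_of_lt hK0)
  have e3 : K * (v - u) = K * v - K * u := by ring
  have e4 : K * (2 * ↑d / (K ^ 2 - 1) * ε) = K * (2 * ↑d / (K ^ 2 - 1)) * ε := by ring
  have e5 : (K ^ 2 + 1) / (K ^ 2 - 1) * ↑d * η - (K ^ 2 + 1) / (K ^ 2 - 1) * ↑d * (η - ε)
      = (K ^ 2 + 1) / (K ^ 2 - 1) * ↑d * ε := by ring
  linarith
end

section
/- Let K > 1, q = (2 log K)/(K^2-1), A = (2/(K^2-1)) sqrt(d) η / σ and B = (2/(K^2-1)) sqrt(d)(η-ε)/σ with 0 < ε < η, d ≥ 1, σ > 0. Then -K*B + sqrt(B^2+q) - (sqrt(d)/(Kσ)) ε > -K*A + sqrt(A^2+q). Equivalently, by monotonicity of Φ, the robust classifier has strictly larger standard error on the harder class +1: R_nat(f_rob, +1) > R_nat(f_nat, +1). -/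
open MeasureTheory ProbabilityTheory

/-- The standard normal CDF. -/
noncomputable def Phi (x : ℝ) : ℝ := ((gaussianReal 0 1) (Set.Iic x)).toReal

lemma Phi_strictMono : StrictMono Phi := by
  intro x y hxy
  have hone : (1 : NNReal) ≠ 0 := one_ne_zero
  have hac := gaussianReal_absolutelyContinuous' 0 hone
  have hpos : gaussianReal 0 1 (Set.Ioc x y) ≠ 0 := by
    intro h
    have hv := hac h
    rw [Real.volume_Ioc] at hv
    have hyx : y - x ≤ 0 := by
      by_contra hc
      push_neg at hc
      simp [ENNReal.ofReal_eq_zero, not_le.mpr hc] at hv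
    linarith
  have hunion : Set.Iic x ∪ Set.Ioc x y = Set.Iic y := Set.Iic_union_Ioc_eq_Iic hxy.le
  have hdisj : Disjoint (Set.Iic x) (Set.Ioc x y) := by
    apply Set.disjoint_left.mpr
    intro a ha hb
    exact absurd ha (not_le.mpr hb.1)
  have hm : gaussianReal 0 1 (Set.Iic y)
      = gaussianReal 0 1 (Set.Iic x) + gaussianReal 0 1 (Set.Ioc x y) := by
    rw [← hunion, measure_union hdisj measurableSet_Ioc]
  have hfinx : gaussianReal 0 1 (Set.Iic x) ≠ ⊤ := measure_ne_top _ _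
  have hfiny : gaussianReal 0 1 (Set.Iic y) ≠ ⊤ := measure_ne_top _ _
  have hlt : gaussianReal 0 1 (Set.Iic x) < gaussianReal 0 1 (Set.Iic y) := by
    rw [hm]
    exact ENNReal.lt_add_right hfinx hpos
  exact (ENNReal.toReal_lt_toReal hfinx hfiny).mpr hlt

/-- With `K > 1`, `q = (2 log K)/(K^2-1)`, `A = (2/(K^2-1)) sqrt(d) η/σ`,
`B = (2/(K^2-1)) sqrt(d)(η-ε)/σ`, `0 < ε < η`, `d ≥ 1`, `σ > 0`:
`-K B + sqrt(B^2+q) - (sqrt(d)/(Kσ)) ε > -K A + sqrt(A^2+q)`, hence by monotonicity of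
`Φ` the robust classifier has strictly larger standard error on the harder class `+1`:
`R_nat(f_rob, +1) > R_nat(f_nat, +1)`. -/
theorem robust_hurts_hard_class (K σ ε η : ℝ) (d : ℕ) (hK : 1 < K) (hd : 1 ≤ d)
    (hσ : 0 < σ) (hε : 0 < ε) (hεη : ε < η)
    (q A B : ℝ) (hq : q = 2 * Real.log K / (K ^ 2 - 1))
    (hA : A = 2 / (K ^ 2 - 1) * Real.sqrt d * η / σ)
    (hB : B = 2 / (K ^ 2 - 1) * Real.sqrt d * (η - ε) / σ) :
    -K * B + Real.sqrt (B ^ 2 + q) - Real.sqrt d / (K * σ) * ε >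
      -K * A + Real.sqrt (A ^ 2 + q) ∧
    Phi (-K * B + Real.sqrt (B ^ 2 + q) - Real.sqrt d / (K * σ) * ε) >
      Phi (-K * A + Real.sqrt (A ^ 2 + q)) := by
  have hK0 : (0:ℝ) < K := lt_trans one_pos hK
  have hK2 : (0:ℝ) < K ^ 2 - 1 := by nlinarith
  have hK2' : K ^ 2 - 1 ≠ 0 := ne_of_gt hK2
  have hσ' : σ ≠ 0 := ne_of_gt hσ
  have hlogK : 0 < Real.log K := Real.log_pos hK
  have hq0 : 0 < q := by rw [hq]; positivity
  have hs1 : (1:ℝ) ≤ Real.sqrt d := by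
    rw [show (1:ℝ) = Real.sqrt 1 by simp]
    exact Real.sqrt_le_sqrt (by exact_mod_cast hd)
  have hs0 : (0:ℝ) < Real.sqrt d := lt_of_lt_of_le one_pos hs1
  set s := Real.sqrt d with hs
  have hB0 : 0 < B := by
    rw [hB]
    exact div_pos (mul_pos (mul_pos (div_pos two_pos hK2) hs0) (by linarith)) hσ
  have hABval : A - B = 2 / (K ^ 2 - 1) * s * ε / σ := by
    rw [hA, hB]; field_simp; ring
  have hδ0 : 0 < A - B := by
    rw [hABval]
    exact div_pos (mul_pos (mul_pos (div_pos two_pos hK2) hs0) hε) hσ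
  have hBlt : B < Real.sqrt (B ^ 2 + q) := by
    exact (Real.lt_sqrt hB0.le).mpr (by linarith)
  have ht2 : 0 ≤ Real.sqrt (B ^ 2 + q) := Real.sqrt_nonneg _
  have key : Real.sqrt (A ^ 2 + q) < Real.sqrt (B ^ 2 + q) + (A - B) := by
    rw [show Real.sqrt (B ^ 2 + q) + (A - B)
        = Real.sqrt ((Real.sqrt (B ^ 2 + q) + (A - B)) ^ 2) by
      rw [Real.sqrt_sq (by linarith)]]
    apply Real.sqrt_lt_sqrt (by positivity)
    have hsq : Real.sqrt (B ^ 2 + q) ^ 2 = B ^ 2 + q := Real.sq_sqrt (by positivity)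
    nlinarith [mul_lt_mul_of_pos_right hBlt hδ0]
  have h2 : s / (K * σ) * ε ≤ (K - 1) * (A - B) := by
    rw [hABval, div_mul_eq_mul_div, div_le_iff₀ (by positivity)]
    have hexp : (K - 1) * (2 / (K ^ 2 - 1) * s * ε / σ) * (K * σ) = 2 * K * s * ε / (K + 1) := by
      field_simp
      ring
    rw [hexp, le_div_iff₀ (by linarith)]
    nlinarith [mul_pos hs0 hε]
  have part1 : -K * B + Real.sqrt (B ^ 2 + q) - s / (K * σ) * ε >
      -K * A + Real.sqrt (A ^ 2 + q) := by linarith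
  exact ⟨part1, Phi_strictMono part1⟩
end

section
/- Suppose the optimal linear classifier for the distribution D has weight vector w and intercept b, and suppose there exist indices i ≠ j with w_i ≠ w_j. Then replacing both w_i and w_j by a common value cannot increase, and for the Gaussian mixture with exchangeable coordinates strictly decreases (for appropriate choice), the total standard error; hence any optimal linear classifier for D satisfies w_1 = w_2 = ... = w_d, and may be taken to be the all-ones vector. -/
open MeasureTheory ProbabilityTheory

/-- Standard error on the positive class `+1 ~ N((η,...,η), K²σ² I)` of the linear
classifier `f(x) = sign(⟨w,x⟩ + b)`. -/
noncomputable def errPosK (d : ℕ) (η σ K : ℝ) (w : Fin d → ℝ) (b : ℝ) : ℝ :=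
  ((Measure.pi fun _ : Fin d => gaussianReal η (Real.toNNReal ((K * σ) ^ 2)))
    {x | ∑ i, w i * x i + b ≤ 0}).toReal

/-- Standard error on the negative class `-1 ~ N(-(η,...,η), σ² I)`. -/
noncomputable def errNegK (d : ℕ) (η σ : ℝ) (w : Fin d → ℝ) (b : ℝ) : ℝ :=
  ((Measure.pi fun _ : Fin d => gaussianReal (-η) (Real.toNNReal (σ ^ 2)))
    {x | 0 < ∑ i, w i * x i + b}).toReal

/-- Average standard error of the balanced mixture `D`. -/
noncomputable def avgErrK (d : ℕ) (η σ K : ℝ) (w : Fin d → ℝ) (b : ℝ) : ℝ :=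
  (errPosK d η σ K w b + errNegK d η σ w b) / 2

open Real
open scoped NNReal ENNReal

attribute [fun_prop] ProbabilityTheory.measurable_gaussianPDF

lemma pdf_conv_aux (m₁ m₂ : ℝ) (v₁ v₂ : ℝ≥0) (h₁ : v₁ ≠ 0) (h₂ : v₂ ≠ 0) (z x : ℝ) :
    gaussianPDFReal m₁ v₁ x * gaussianPDFReal m₂ v₂ (z - x)
      = gaussianPDFReal (m₁ + m₂) (v₁ + v₂) z *
        gaussianPDFReal (m₁ + (z - m₁ - m₂) * v₁ / (v₁ + v₂)) (v₁ * v₂ / (v₁ + v₂)) x := by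
  have hv₁ : (0:ℝ) < v₁ := lt_of_le_of_ne v₁.coe_nonneg (by exact_mod_cast h₁.symm)
  have hv₂ : (0:ℝ) < v₂ := lt_of_le_of_ne v₂.coe_nonneg (by exact_mod_cast h₂.symm)
  have hs : (0:ℝ) < (v₁:ℝ) + v₂ := by positivity
  have hπ : (0:ℝ) < π := Real.pi_pos
  simp only [gaussianPDFReal]
  have hcoe : ((v₁ * v₂ / (v₁ + v₂) : ℝ≥0) : ℝ) = (v₁:ℝ) * v₂ / ((v₁:ℝ) + v₂) := by
    push_cast; ring
  have hcoe2 : (((v₁ + v₂) : ℝ≥0) : ℝ) = (v₁:ℝ) + v₂ := by push_cast; ring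
  rw [hcoe, hcoe2]
  rw [mul_mul_mul_comm, mul_mul_mul_comm ((√(2 * π * ((v₁:ℝ) + v₂)))⁻¹)]
  congr 1
  · rw [← mul_inv, ← mul_inv, ← Real.sqrt_mul (by positivity), ← Real.sqrt_mul (by positivity)]
    congr 2
    field_simp
  · rw [← Real.exp_add, ← Real.exp_add]
    congr 1
    field_simp
    ring

lemma gaussian_conv (m₁ m₂ : ℝ) (v₁ v₂ : ℝ≥0) :
    Measure.map (fun p : ℝ × ℝ => p.1 + p.2)
        ((gaussianReal m₁ v₁).prod (gaussianReal m₂ v₂))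
      = gaussianReal (m₁ + m₂) (v₁ + v₂) := by
  by_cases h₁ : v₁ = 0
  · subst h₁
    rw [gaussianReal_zero_var, Measure.dirac_prod, zero_add,
      Measure.map_map (by fun_prop) (by fun_prop)]
    have : ((fun p : ℝ × ℝ => p.1 + p.2) ∘ Prod.mk m₁) = (fun x => m₁ + x) := rfl
    rw [this, gaussianReal_map_const_add, add_comm m₂ m₁]
  by_cases h₂ : v₂ = 0
  · subst h₂
    rw [gaussianReal_zero_var, Measure.prod_dirac, add_zero,
      Measure.map_map (by fun_prop) (by fun_prop)]
    have : ((fun p : ℝ × ℝ => p.1 + p.2) ∘ (fun x => (x, m₂))) = (fun x => x + m₂) := rfl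
    rw [this, gaussianReal_map_add_const]
  -- nondegenerate case
  have hvs : v₁ + v₂ ≠ 0 := by simp [h₁]
  have hv' : v₁ * v₂ / (v₁ + v₂) ≠ 0 := by
    refine div_ne_zero (mul_ne_zero h₁ h₂) hvs
  ext s hs
  rw [Measure.map_apply (by fun_prop) hs,
    gaussianReal_of_var_ne_zero _ h₁, gaussianReal_of_var_ne_zero _ h₂]
  rw [Measure.prod_apply (measurable_add hs)]
  have step1 : ∀ x : ℝ, (volume.withDensity (gaussianPDF m₂ v₂)) (Prod.mk x ⁻¹' ((fun p : ℝ × ℝ => p.1 + p.2) ⁻¹' s))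
      = ∫⁻ z in s, gaussianPDF m₂ v₂ (z - x) := by
    intro x
    have hmap : (volume.withDensity (gaussianPDF m₂ v₂)).map (x + ·)
        = volume.withDensity (gaussianPDF (m₂ + x) v₂) := by
      rw [← gaussianReal_of_var_ne_zero _ h₂, gaussianReal_map_const_add,
        gaussianReal_of_var_ne_zero _ h₂]
    have : (Prod.mk x ⁻¹' ((fun p : ℝ × ℝ => p.1 + p.2) ⁻¹' s)) = (x + ·) ⁻¹' s := rfl
    rw [this, ← Measure.map_apply (by fun_prop) hs, hmap,
      withDensity_apply _ hs]
    refine setLIntegral_congr_fun hs (fun z _ => ?_)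
    simp only [gaussianPDF]
    rw [gaussianPDFReal_sub]
  simp_rw [step1]
  have hmeas : Measurable fun x : ℝ => ∫⁻ z in s, gaussianPDF m₂ v₂ (z - x) :=
    Measurable.lintegral_prod_right'
      (f := fun p : ℝ × ℝ => gaussianPDF m₂ v₂ (p.2 - p.1)) (by fun_prop)
  rw [lintegral_withDensity_eq_lintegral_mul _ (measurable_gaussianPDF _ _) hmeas]
  simp only [Pi.mul_apply]
  have swap : ∫⁻ x, gaussianPDF m₁ v₁ x * ∫⁻ z in s, gaussianPDF m₂ v₂ (z - x)
      = ∫⁻ z in s, ∫⁻ x, gaussianPDF m₁ v₁ x * gaussianPDF m₂ v₂ (z - x) := by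
    have e1 : ∀ x : ℝ, gaussianPDF m₁ v₁ x * ∫⁻ z in s, gaussianPDF m₂ v₂ (z - x)
        = ∫⁻ z in s, gaussianPDF m₁ v₁ x * gaussianPDF m₂ v₂ (z - x) :=
      fun x => (lintegral_const_mul _ (by fun_prop)).symm
    rw [lintegral_congr e1, lintegral_lintegral_swap (by fun_prop)]
  rw [swap, gaussianReal_of_var_ne_zero _ hvs, withDensity_apply _ hs]
  refine setLIntegral_congr_fun hs (fun z _ => ?_)
  have inner : ∀ x, gaussianPDF m₁ v₁ x * gaussianPDF m₂ v₂ (z - x)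
      = gaussianPDF (m₁ + m₂) (v₁ + v₂) z *
        gaussianPDF (m₁ + (z - m₁ - m₂) * v₁ / (v₁ + v₂)) (v₁ * v₂ / (v₁ + v₂)) x := by
    intro x
    simp only [gaussianPDF]
    rw [← ENNReal.ofReal_mul (gaussianPDFReal_nonneg _ _ _),
      ← ENNReal.ofReal_mul (gaussianPDFReal_nonneg _ _ _),
      pdf_conv_aux m₁ m₂ v₁ v₂ h₁ h₂ z x]
  simp_rw [inner]
  rw [lintegral_const_mul _ (by fun_prop), lintegral_gaussianPDF_eq_one _ hv', mul_one]

lemma pi_map_sum : ∀ (n : ℕ) (w : Fin n → ℝ) (m : ℝ) (v : ℝ≥0),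
    Measure.map (fun x : Fin n → ℝ => ∑ i, w i * x i)
        (Measure.pi fun _ => gaussianReal m v)
      = gaussianReal ((∑ i, w i) * m) (Real.toNNReal (∑ i, (w i)^2) * v) := by
  intro n
  induction n with
  | zero =>
    intro w m v
    simp only [Finset.univ_eq_empty, Finset.sum_empty, zero_mul, Real.toNNReal_zero]
    have : (fun x : Fin 0 → ℝ => (0:ℝ)) = fun _ => 0 := rfl
    rw [Measure.map_const, measure_univ, one_smul, gaussianReal_zero_var]
  | succ n ih =>
    intro w m v
    have hmp := measurePreserving_piFinSuccAbove (fun _ : Fin (n+1) => gaussianReal m v) 0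
    set e := MeasurableEquiv.piFinSuccAbove (fun _ : Fin (n+1) => ℝ) 0
    have hpi : Measure.pi (fun _ : Fin (n+1) => gaussianReal m v)
        = Measure.map e.symm ((gaussianReal m v).prod
            (Measure.pi fun _ : Fin n => gaussianReal m v)) := by
      rw [← hmp.map_eq, Measure.map_map e.symm.measurable e.measurable]
      simp
    rw [hpi, Measure.map_map (by fun_prop) e.symm.measurable]
    have hfe : ((fun x : Fin (n+1) → ℝ => ∑ i, w i * x i) ∘ e.symm)
        = fun p : ℝ × (Fin n → ℝ) => w 0 * p.1 + ∑ j : Fin n, w (Fin.succ j) * p.2 j := by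
      ext p
      simp [e, MeasurableEquiv.piFinSuccAbove, Fin.sum_univ_succ]
    rw [hfe]
    have hcomp : (fun p : ℝ × (Fin n → ℝ) => w 0 * p.1 + ∑ j : Fin n, w (Fin.succ j) * p.2 j)
        = (fun q : ℝ × ℝ => q.1 + q.2) ∘
          (Prod.map (fun t : ℝ => w 0 * t) (fun y : Fin n → ℝ => ∑ j, w (Fin.succ j) * y j)) := rfl
    rw [hcomp, ← Measure.map_map (by fun_prop) (by fun_prop),
      ← Measure.map_prod_map _ _ (by fun_prop) (by fun_prop),
      gaussianReal_map_const_mul (μ := m) (v := v) (w 0),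
      ih (fun j => w (Fin.succ j)) m v, gaussian_conv]
    congr 1
    · rw [Fin.sum_univ_succ]; ring
    · refine NNReal.coe_injective ?_
      push_cast [Real.coe_toNNReal _ (Finset.sum_nonneg fun i _ => sq_nonneg (w i)),
        Real.coe_toNNReal _ (Finset.sum_nonneg fun i _ => sq_nonneg _)]
      rw [Fin.sum_univ_succ]
      ring

noncomputable def gcdf (t : ℝ) : ℝ := ((gaussianReal 0 1) (Set.Iic t)).toReal

lemma gaussianReal_eq_map (m : ℝ) {v : ℝ≥0} (hv : v ≠ 0) :
    gaussianReal m v = Measure.map (fun x => √v * x + m) (gaussianReal 0 1) := by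
  have h1 : Measure.map (fun x : ℝ => √v * x) (gaussianReal 0 1) = gaussianReal 0 v := by
    rw [show (fun x : ℝ => √v * x) = (√(v:ℝ) * ·) from rfl, gaussianReal_map_const_mul]
    congr 1
    · ring
    · refine NNReal.coe_injective ?_
      push_cast
      rw [mul_one, Real.sq_sqrt v.coe_nonneg]
  have h2 : (fun x : ℝ => √v * x + m) = (· + m) ∘ (fun x : ℝ => √v * x) := rfl
  rw [h2, ← Measure.map_map (by fun_prop) (by fun_prop), h1, gaussianReal_map_add_const,
    zero_add]

lemma gaussianReal_Iic (m : ℝ) {v : ℝ≥0} (hv : v ≠ 0) (c : ℝ) :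
    ((gaussianReal m v) (Set.Iic c)).toReal = gcdf ((c - m) / √v) := by
  have hvpos : (0:ℝ) < √v := Real.sqrt_pos.2 (by positivity)
  rw [gaussianReal_eq_map m hv, Measure.map_apply (by fun_prop) measurableSet_Iic]
  have : (fun x : ℝ => √v * x + m) ⁻¹' Set.Iic c = Set.Iic ((c - m) / √v) := by
    ext x
    simp only [Set.mem_preimage, Set.mem_Iic, le_div_iff₀ hvpos]
    constructor <;> intro h <;> linarith
  rw [this]; rfl

lemma gcdf_strictMono : StrictMono gcdf := by
  intro a b hab
  have h1 : Set.Iic b = Set.Iic a ∪ Set.Ioc a b := (Set.Iic_union_Ioc_eq_Iic hab.le).symm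
  have hd : Disjoint (Set.Iic a) (Set.Ioc a b) := Set.Iic_disjoint_Ioc le_rfl
  unfold gcdf
  rw [h1, measure_union hd measurableSet_Ioc]
  rw [ENNReal.toReal_add (measure_ne_top _ _) (measure_ne_top _ _)]
  have hpos : 0 < ((gaussianReal 0 1) (Set.Ioc a b)).toReal := by
    rw [gaussianReal_apply_eq_integral 0 one_ne_zero, ENNReal.toReal_ofReal
      (integral_nonneg (fun x => gaussianPDFReal_nonneg _ _ _))]
    rw [setIntegral_pos_iff_support_of_nonneg_ae
      (ae_of_all _ (fun x => gaussianPDFReal_nonneg 0 1 x))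
      ((integrable_gaussianPDFReal 0 1).integrableOn)]
    have hsupp : Function.support (gaussianPDFReal 0 1) = Set.univ :=
      Set.eq_univ_of_forall fun x => (gaussianPDFReal_pos 0 1 x one_ne_zero).ne'
    rw [hsupp, Set.univ_inter, Real.volume_Ioc]
    simp [hab]
  linarith
lemma gaussianReal_Ioi (m : ℝ) {v : ℝ≥0} (hv : v ≠ 0) (c : ℝ) :
    ((gaussianReal m v) (Set.Ioi c)).toReal = 1 - gcdf ((c - m) / √v) := by
  have := measure_add_measure_compl (μ := gaussianReal m v) (s := Set.Iic c) measurableSet_Iic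
  rw [Set.compl_Iic] at this
  have h2 := congrArg ENNReal.toReal this
  rw [ENNReal.toReal_add (measure_ne_top _ _) (measure_ne_top _ _), measure_univ,
    ENNReal.toReal_one, gaussianReal_Iic m hv c] at h2
  linarith

lemma meas_lin {d : ℕ} (w : Fin d → ℝ) :
    Measurable (fun x : Fin d → ℝ => ∑ i, w i * x i) :=
  Finset.measurable_sum _ fun i _ => (measurable_pi_apply i).const_mul _

lemma errPos_formula (d : ℕ) (η σ K : ℝ) (hσ : 0 < σ) (hK : 0 < K) (w : Fin d → ℝ)
    (hw : 0 < ∑ i, (w i)^2) (b : ℝ) :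
    errPosK d η σ K w b
      = gcdf ((-b - (∑ i, w i) * η) / (√(∑ i, (w i)^2) * (K * σ))) := by
  have hset : {x : Fin d → ℝ | ∑ i, w i * x i + b ≤ 0}
      = (fun x : Fin d → ℝ => ∑ i, w i * x i) ⁻¹' (Set.Iic (-b)) := by
    ext x; simp only [Set.mem_setOf_eq, Set.mem_preimage, Set.mem_Iic]; constructor <;>
      intro h <;> linarith
  have hv : Real.toNNReal (∑ i, (w i)^2) * Real.toNNReal ((K * σ)^2) ≠ 0 := by
    refine mul_ne_zero ?_ ?_ <;> simp only [ne_eq, Real.toNNReal_eq_zero, not_le] <;> positivity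
  rw [errPosK, hset, ← Measure.map_apply (meas_lin w) measurableSet_Iic, pi_map_sum,
    gaussianReal_Iic _ hv]
  have hs : √((Real.toNNReal (∑ i, (w i)^2) * Real.toNNReal ((K * σ)^2) : ℝ≥0) : ℝ)
      = √(∑ i, (w i)^2) * (K * σ) := by
    rw [show ((Real.toNNReal (∑ i, (w i)^2) * Real.toNNReal ((K * σ)^2) : ℝ≥0) : ℝ)
        = (∑ i, (w i)^2) * (K * σ)^2 by
      push_cast [Real.coe_toNNReal _ hw.le, Real.coe_toNNReal _ (sq_nonneg (K * σ))]; ring]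
    rw [Real.sqrt_mul hw.le, Real.sqrt_sq (by positivity)]
  rw [hs]

lemma errNeg_formula (d : ℕ) (η σ : ℝ) (hσ : 0 < σ) (w : Fin d → ℝ)
    (hw : 0 < ∑ i, (w i)^2) (b : ℝ) :
    errNegK d η σ w b
      = 1 - gcdf ((-b + (∑ i, w i) * η) / (√(∑ i, (w i)^2) * σ)) := by
  have hset : {x : Fin d → ℝ | 0 < ∑ i, w i * x i + b}
      = (fun x : Fin d → ℝ => ∑ i, w i * x i) ⁻¹' (Set.Ioi (-b)) := by
    ext x; simp only [Set.mem_setOf_eq, Set.mem_preimage, Set.mem_Ioi]; constructor <;>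
      intro h <;> linarith
  have hv : Real.toNNReal (∑ i, (w i)^2) * Real.toNNReal (σ^2) ≠ 0 := by
    refine mul_ne_zero ?_ ?_ <;> simp only [ne_eq, Real.toNNReal_eq_zero, not_le] <;> positivity
  rw [errNegK, hset, ← Measure.map_apply (meas_lin w) measurableSet_Ioi, pi_map_sum,
    gaussianReal_Ioi _ hv]
  have hs : √((Real.toNNReal (∑ i, (w i)^2) * Real.toNNReal (σ^2) : ℝ≥0) : ℝ)
      = √(∑ i, (w i)^2) * σ := by
    rw [show ((Real.toNNReal (∑ i, (w i)^2) * Real.toNNReal (σ^2) : ℝ≥0) : ℝ)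
        = (∑ i, (w i)^2) * σ^2 by
      push_cast [Real.coe_toNNReal _ hw.le, Real.coe_toNNReal _ (sq_nonneg σ)]; ring]
    rw [Real.sqrt_mul hw.le, Real.sqrt_sq hσ.le]
  rw [hs]
  congr 2
  ring

set_option maxHeartbeats 1000000 in
/-- Any optimal linear classifier for the mixture `D` (class `+1 ~ N((η,...,η), K²σ² I)`,
class `-1 ~ N(-(η,...,η), σ² I)`, `K > 1`) has all weight coordinates equal, and the
all-ones weight vector (with a suitable intercept) attains the minimum. -/
theorem optimal_weights_equal (d : ℕ) (hd : 1 ≤ d) (η σ K : ℝ) (hη : 0 < η)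
    (hσ : 0 < σ) (hK : 1 < K) (w : Fin d → ℝ) (b : ℝ)
    (hopt : ∀ (w' : Fin d → ℝ) (b' : ℝ), avgErrK d η σ K w b ≤ avgErrK d η σ K w' b') :
    (∀ i j, w i = w j) ∧
    ∃ b1 : ℝ, ∀ (w' : Fin d → ℝ) (b' : ℝ),
      avgErrK d η σ K (fun _ => 1) b1 ≤ avgErrK d η σ K w' b' := by
  have hK0 : (0:ℝ) < K := lt_trans one_pos hK
  have hd0 : (0:ℝ) < (d:ℝ) := by exact_mod_cast hd
  have hrd : (0:ℝ) < √(d:ℝ) := Real.sqrt_pos.2 hd0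
  -- all-ones facts
  have hone_sum : (∑ _i : Fin d, (1:ℝ)) = (d:ℝ) := by simp
  have hone_sq : (∑ _i : Fin d, (1:ℝ)^2) = (d:ℝ) := by simp
  have hQ1 : (0:ℝ) < ∑ _i : Fin d, (1:ℝ)^2 := by rw [hone_sq]; exact hd0
  -- the average error of a general (w', b') with positive sum-of-squares
  have avg_formula : ∀ (w' : Fin d → ℝ) (b' : ℝ), 0 < (∑ i, (w' i)^2) →
      avgErrK d η σ K w' b'
        = (gcdf ((-b' - (∑ i, w' i) * η) / (√(∑ i, (w' i)^2) * (K * σ)))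
            + (1 - gcdf ((-b' + (∑ i, w' i) * η) / (√(∑ i, (w' i)^2) * σ)))) / 2 := by
    intro w' b' hq
    rw [avgErrK, errPos_formula d η σ K hσ hK0 w' hq b', errNeg_formula d η σ hσ w' hq b']
  -- Step 0 : the all-ones classifier with intercept 0 beats 1/2
  have hone_lt : avgErrK d η σ K (fun _ => 1) 0 < 1/2 := by
    have h := avg_formula (fun _ => 1) 0 (by simpa using hQ1)
    simp only [hone_sum, hone_sq] at h
    rw [h]
    have hlt : gcdf ((-0 - (d:ℝ) * η) / (√(d:ℝ) * (K * σ)))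
        < gcdf ((-0 + (d:ℝ) * η) / (√(d:ℝ) * σ)) := by
      apply gcdf_strictMono
      have h1 : (-0 - (d:ℝ) * η) / (√(d:ℝ) * (K * σ)) < 0 := by
        apply div_neg_of_neg_of_pos <;> [skip; positivity]
        nlinarith
      have h2 : (0:ℝ) < (-0 + (d:ℝ) * η) / (√(d:ℝ) * σ) := by
        apply div_pos <;> [skip; positivity]
        nlinarith
      linarith
    linarith
  -- Step 1 : w ≠ 0
  have hQnn : (0:ℝ) ≤ ∑ i, (w i)^2 := Finset.sum_nonneg fun i _ => sq_nonneg _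
  have hQ : (0:ℝ) < ∑ i, (w i)^2 := by
    rcases hQnn.lt_or_eq with h | h
    · exact h
    · exfalso
      have hz : ∀ i, w i = 0 := by
        intro i
        have := (Finset.sum_eq_zero_iff_of_nonneg
          (fun i _ => sq_nonneg (w i))).1 h.symm i (Finset.mem_univ i)
        exact pow_eq_zero_iff two_ne_zero |>.1 this
      have havg : avgErrK d η σ K w b = 1/2 := by
        have hz' : ∀ x : Fin d → ℝ, (∑ i, w i * x i) = 0 := fun x => by
          simp [hz]
        rw [avgErrK, errPosK, errNegK]
        by_cases hb : b ≤ 0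
        · have hU : {x : Fin d → ℝ | ∑ i, w i * x i + b ≤ 0} = Set.univ := by
            ext x; simp [hz' x, hb]
          have hE : {x : Fin d → ℝ | 0 < ∑ i, w i * x i + b} = ∅ := by
            ext x; simp [hz' x]; linarith
          rw [hU, hE]
          simp
        · have hU : {x : Fin d → ℝ | ∑ i, w i * x i + b ≤ 0} = ∅ := by
            ext x; simp [hz' x]; linarith
          have hE : {x : Fin d → ℝ | 0 < ∑ i, w i * x i + b} = Set.univ := by
            ext x; simp [hz' x]; linarith
          rw [hU, hE]
          simp
      have := hopt (fun _ => 1) 0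
      rw [havg] at this
      linarith
  have hrQ : (0:ℝ) < √(∑ i, (w i)^2) := Real.sqrt_pos.2 hQ
  -- Step 2 : sum of weights is maximal : ∑ w = √d √Q
  have hSle : (∑ i, w i) ≤ √(d:ℝ) * √(∑ i, (w i)^2) := by
    have hcs : (∑ i, w i)^2 ≤ (∑ i, (w i)^2) * (d:ℝ) := by
      have := Finset.sum_mul_sq_le_sq_mul_sq Finset.univ w (fun _ => (1:ℝ))
      simpa [hone_sq] using this
    rcases le_or_gt (∑ i, w i) 0 with h | h
    · exact le_trans h (by positivity)
    · calc (∑ i, w i) = √((∑ i, w i)^2) := (Real.sqrt_sq h.le).symm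
        _ ≤ √((∑ i, (w i)^2) * (d:ℝ)) := Real.sqrt_le_sqrt hcs
        _ = √(d:ℝ) * √(∑ i, (w i)^2) := by
            rw [Real.sqrt_mul hQnn, mul_comm]
  have hSge : √(d:ℝ) * √(∑ i, (w i)^2) ≤ (∑ i, w i) := by
    by_contra hS
    push_neg at hS
    -- the improved classifier
    set c : ℝ := √(∑ i, (w i)^2) / √(d:ℝ) with hc
    have hc0 : 0 < c := by positivity
    have hdd : √(d:ℝ) * √(d:ℝ) = (d:ℝ) := Real.mul_self_sqrt hd0.le
    have hsum2 : (∑ _i : Fin d, c) = √(d:ℝ) * √(∑ i, (w i)^2) := by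
      rw [Finset.sum_const, Finset.card_univ, Fintype.card_fin, nsmul_eq_mul, hc]
      field_simp
      linear_combination (-1:ℝ) * hdd
    have hsq2 : (∑ _i : Fin d, c^2) = ∑ i, (w i)^2 := by
      rw [Finset.sum_const, Finset.card_univ, Fintype.card_fin, nsmul_eq_mul, hc]
      rw [div_pow, Real.sq_sqrt hQnn, Real.sq_sqrt hd0.le]
      field_simp
    have himp : avgErrK d η σ K (fun _ => c) b < avgErrK d η σ K w b := by
      rw [avg_formula w b hQ, avg_formula (fun _ => c) b (by rw [hsq2]; exact hQ)]
      simp only [hsum2, hsq2]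
      have e1 : gcdf ((-b - (√(d:ℝ) * √(∑ i, (w i)^2)) * η) / (√(∑ i, (w i)^2) * (K * σ)))
          < gcdf ((-b - (∑ i, w i) * η) / (√(∑ i, (w i)^2) * (K * σ))) := by
        apply gcdf_strictMono
        have hden : 0 < √(∑ i, (w i)^2) * (K * σ) := by positivity
        rw [div_lt_div_iff₀ hden hden]
        nlinarith [mul_pos hden (mul_pos hη (sub_pos.2 hS))]
      have e2 : gcdf ((-b + (∑ i, w i) * η) / (√(∑ i, (w i)^2) * σ))
          < gcdf ((-b + (√(d:ℝ) * √(∑ i, (w i)^2)) * η) / (√(∑ i, (w i)^2) * σ)) := by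
        apply gcdf_strictMono
        have hden : 0 < √(∑ i, (w i)^2) * σ := by positivity
        rw [div_lt_div_iff₀ hden hden]
        nlinarith [mul_pos hden (mul_pos hη (sub_pos.2 hS))]
      linarith
    have := hopt (fun _ => c) b
    linarith
  have hSeq : (∑ i, w i) = √(d:ℝ) * √(∑ i, (w i)^2) := le_antisymm hSle hSge
  have hSpos : 0 < (∑ i, w i) := by
    rw [hSeq]; positivity
  -- equality case of Cauchy-Schwarz : all weights equal
  have hsq_eq : (∑ i, w i)^2 = (d:ℝ) * (∑ i, (w i)^2) := by
    rw [hSeq, mul_pow, Real.sq_sqrt hd0.le, Real.sq_sqrt hQnn]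
  have hexp : (∑ i, (w i - (∑ j, w j)/(d:ℝ))^2) = 0 := by
    have h1 : ∀ i : Fin d, (w i - (∑ j, w j)/(d:ℝ))^2
        = (w i)^2 - 2*((∑ j, w j)/(d:ℝ))*(w i) + ((∑ j, w j)/(d:ℝ))^2 := fun i => by ring
    rw [Finset.sum_congr rfl fun i _ => h1 i]
    rw [Finset.sum_add_distrib, Finset.sum_sub_distrib, ← Finset.mul_sum,
      Finset.sum_const, Finset.card_univ, Fintype.card_fin, nsmul_eq_mul]
    field_simp
    linear_combination (-1:ℝ) * hsq_eq
  have hweq : ∀ i, w i = (∑ j, w j)/(d:ℝ) := by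
    intro i
    have := (Finset.sum_eq_zero_iff_of_nonneg
      (fun i _ => sq_nonneg (w i - (∑ j, w j)/(d:ℝ)))).1 hexp i (Finset.mem_univ i)
    have h0 := pow_eq_zero_iff two_ne_zero |>.1 this
    linarith
  refine ⟨fun i j => by rw [hweq i, hweq j], ?_⟩
  -- the all-ones classifier with rescaled intercept
  set c : ℝ := (∑ j, w j)/(d:ℝ) with hc
  have hc0 : 0 < c := div_pos hSpos hd0
  refine ⟨b / c, fun w' b' => ?_⟩
  have hkey : avgErrK d η σ K (fun _ => 1) (b / c) = avgErrK d η σ K w b := by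
    have hQw : (∑ i, (w i)^2) = (d:ℝ) * c^2 := by
      have hsq : ∀ i : Fin d, (w i)^2 = c^2 := fun i => by rw [hweq i]
      rw [Finset.sum_congr rfl fun i _ => hsq i, Finset.sum_const, Finset.card_univ,
        Fintype.card_fin, nsmul_eq_mul]
    have hSw : (∑ i, w i) = (d:ℝ) * c := by
      rw [hc]; field_simp
    have hrQw : √(∑ i, (w i)^2) = √(d:ℝ) * c := by
      rw [hQw, Real.sqrt_mul hd0.le, Real.sqrt_sq hc0.le]
    have hQ1' : (0:ℝ) < ∑ i : Fin d, ((fun _ => (1:ℝ)) i)^2 := by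
      simpa using hQ1
    rw [avg_formula w b hQ, avg_formula (fun _ => 1) (b/c) hQ1']
    simp only [hone_sum, hone_sq, hSw, hrQw]
    have harg1 : (-(b/c) - (d:ℝ) * η) / (√(d:ℝ) * (K * σ))
        = (-b - (d:ℝ) * c * η) / (√(d:ℝ) * c * (K * σ)) := by
      rw [div_eq_div_iff (by positivity) (by positivity)]
      field_simp
    have harg2 : (-(b/c) + (d:ℝ) * η) / (√(d:ℝ) * σ)
        = (-b + (d:ℝ) * c * η) / (√(d:ℝ) * c * σ) := by
      rw [div_eq_div_iff (by positivity) (by positivity)]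
      field_simp
    rw [harg1, harg2]
  rw [hkey]
  exact hopt w' b'
end
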